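/- arXiv:1812.07359 — 2 statements merged into one kernel-verified Lean document; each statement's English description precedes it below -/
import Mathlib

section
/- Let T = (Q, Σ, δ) be an S-automaton and p⃗, q⃗, r⃗ ∈ Q*. If there exists a word u ∈ Σ* on which p⃗r⃗∘ and q⃗r⃗∘ act differently (i.e., one is defined and the other not, or both are defined with different outputs), then there exists such a word of length at most |Q|^(|p⃗|+|q⃗|+|r⃗|). -/
/-- An S-automaton: a deterministic, possibly partial, letter-to-letter transducer.
`δ q a = some (b, p)` means there is a transition q --a/b--> p. Determinism is built in. -/
structure SAut (Q A : Type) where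
  δ : Q → A → Option (A × Q)

namespace SAut

variable {Q A : Type}

/-- The run of the automaton starting in `q` on input `u`: output word and end state. -/
def run (T : SAut Q A) (q : Q) : List A → Option (List A × Q)
  | [] => some ([], q)
  | a :: as => (T.δ q a).bind fun bp => (T.run bp.2 as).map fun vr => (bp.1 :: vr.1, vr.2)

/-- The partial action `q ∘ u` of a single state on a word (the output of the run). -/
def act1 (T : SAut Q A) (q : Q) (u : List A) : Option (List A) := (T.run q u).map Prod.fst

/-- The dual action `q · u` of a word on a single state (the end state of the run). -/
def dual1 (T : SAut Q A) (q : Q) (u : List A) : Option Q := (T.run q u).map Prod.snd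

/-- The partial action of a state sequence on a word; the head of the list acts first
(so the list `[q₁, q₂, …, q_ℓ]` represents the composition `q_ℓ ∘ ⋯ ∘ q₂ ∘ q₁`). -/
def act (T : SAut Q A) : List Q → List A → Option (List A)
  | [], u => some u
  | q :: qs, u => (T.act1 q u).bind (T.act qs)

/-- The dual partial action of a word on a state sequence:
`ε · u = ε` and `(p⃗ q) · u = (p⃗ · (q ∘ u)) (q · u)` (head of the list acts first). -/
def dual (T : SAut Q A) : List Q → List A → Option (List Q)
  | [], _ => some []
  | q :: qs, u =>
      (T.act1 q u).bind fun v =>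
        (T.dual1 q u).bind fun qd =>
          (T.dual qs v).map fun rest => qd :: rest

/-- The orbit `Q* ∘ u` of a word under the partial action of all state sequences. -/
def orbit (T : SAut Q A) (u : List A) : Set (List A) := { v | ∃ l : List Q, T.act l u = some v }

/-- Completeness: every state has a transition for every input letter. -/
def Complete (T : SAut Q A) : Prop := ∀ q a, (T.δ q a).isSome

/-- Reversibility: every state has at most one incoming transition with a given input letter. -/
def Reversible (T : SAut Q A) : Prop :=
  ∀ p p' a b b' q, T.δ p a = some (b, q) → T.δ p' a = some (b', q) → p = p'

/-- Invertibility (inverse-determinism): for every state and output letter there is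
at most one transition with that output letter. -/
def Invertible (T : SAut Q A) : Prop :=
  ∀ q a a' b p p', T.δ q a = some (b, p) → T.δ q a' = some (b, p') → a = a'

/-- The disjoint union of two automata over the same alphabet. -/
def union (T₁ T₂ : SAut Q A) : SAut (Q ⊕ Q) A where
  δ s a := match s with
    | Sum.inl q => (T₁.δ q a).map fun bp => (bp.1, Sum.inl bp.2)
    | Sum.inr q => (T₂.δ q a).map fun bp => (bp.1, Sum.inr bp.2)

open Classical in
/-- The inverse automaton: swap input and output labels on every transition.
(For an invertible automaton this is the deterministic inverse automaton.) -/
noncomputable def inv (T : SAut Q A) : SAut Q A where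
  δ q b := if h : ∃ ap : A × Q, T.δ q ap.1 = some (b, ap.2) then some h.choose else none

/-- The union `T ⊔ T̄` of an automaton with its inverse; its states are `Q̃ = Q ⊔ Q̄`. -/
noncomputable def tilde (T : SAut Q A) : SAut (Q ⊕ Q) A := T.union T.inv

/-- `Stab¹(u)`: all state sequences (including the empty one) defined on `u` that fix `u`. -/
def stab1 (T : SAut Q A) (u : List A) : Set (List Q) := { l | T.act l u = some u }

/-- `Stab(u)`: all nonempty state sequences defined on `u` that fix `u`. -/
def stab (T : SAut Q A) (u : List A) : Set (List Q) := { l | l ≠ [] ∧ T.act l u = some u }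

/-- The shifted stabilizer `Stab¹(u) · u` as a set of state sequences. -/
def stab1Shift (T : SAut Q A) (u : List A) : Set (List Q) :=
  { l' | ∃ l ∈ T.stab1 u, T.dual l u = some l' }

/-- The orbit `Stab¹(u) · u ∘ x` of `x` under the shifted stabilizer. -/
def stab1ShiftOrbit (T : SAut Q A) (u x : List A) : Set (List A) :=
  { y | ∃ l' ∈ T.stab1Shift u, T.act l' x = some y }

/-- The shifted stabilizer `Stab(u) · u ∘` as a set of partial functions on words. -/
def shiftedStabFun (T : SAut Q A) (u : List A) : Set (List A → Option (List A)) :=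
  { f | ∃ l ∈ T.stab u, ∃ l', T.dual l u = some l' ∧ f = T.act l' }

end SAut

namespace SAut

variable {Q A : Type} (T : SAut Q A)

def runs (T : SAut Q A) : List Q → List A → Option (List A × List Q)
  | [], u => some (u, [])
  | q :: qs, u => (T.run q u).bind fun vr =>
      (T.runs qs vr.1).map fun ws => (ws.1, vr.2 :: ws.2)

variable (T : SAut Q A)

theorem act_runs (l : List Q) (u : List A) :
    T.act l u = (T.runs l u).map Prod.fst := by
  induction l generalizing u with
  | nil => simp [act, runs]
  | cons a l ih =>
      simp only [act, runs, act1]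
      cases h : T.run a u with
      | none => simp
      | some vr =>
          simp only [Option.map_some, Option.bind_some, ih vr.1]
          cases T.runs l vr.1 <;> simp

theorem run_append (q : Q) (x w : List A) :
    T.run q (x ++ w) = (T.run q x).bind fun vs =>
      (T.run vs.2 w).map fun vs' => (vs.1 ++ vs'.1, vs'.2) := by
  induction x generalizing q with
  | nil =>
      simp only [List.nil_append, run, Option.bind_some, List.append_eq]
      cases T.run q w <;> simp
  | cons a as ih =>
      simp only [List.cons_append, run, List.append_eq]
      cases T.δ q a with
      | none => simp
      | some bp =>
        simp only [Option.bind_some, ih bp.2]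
        cases h2 : T.run bp.2 as with
        | none => simp
        | some vr =>
          simp only [Option.bind_some, Option.map_some]
          cases T.run vr.2 w <;> simp

theorem runs_append (l : List Q) (x w : List A) :
    T.runs l (x ++ w) = (T.runs l x).bind fun vd =>
      (T.runs vd.2 w).map fun vd' => (vd.1 ++ vd'.1, vd'.2) := by
  induction l generalizing x w with
  | nil => simp [runs]
  | cons a l ih =>
      simp only [runs, run_append, List.append_eq]
      cases h1 : T.run a x with
      | none => simp
      | some vr =>
          simp only [Option.bind_some, Option.map_some]
          cases h2 : T.run vr.2 w with
          | none =>
              simp only [Option.map_none, Option.bind_none]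
              cases h3 : T.runs l vr.1 with
              | none => simp
              | some ws => simp [runs, h2]
          | some vs =>
              simp only [Option.map_some, Option.bind_some, ih vr.1 vs.1]
              cases h3 : T.runs l vr.1 with
              | none => simp
              | some ws =>
                  simp only [Option.bind_some, Option.map_some, runs, h2,
                    Option.bind_some]
                  cases T.runs ws.2 vs.1 <;> simp

theorem runs_split (l1 l2 : List Q) (u : List A) :
    T.runs (l1 ++ l2) u = (T.runs l1 u).bind fun vd =>
      (T.runs l2 vd.1).map fun vd' => (vd'.1, vd.2 ++ vd'.2) := by
  induction l1 generalizing u with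
  | nil =>
      simp only [List.nil_append, runs, Option.bind_some, List.append_eq]
      cases T.runs l2 u <;> simp
  | cons a l ih =>
      simp only [List.cons_append, runs, List.append_eq]
      cases h1 : T.run a u with
      | none => simp
      | some vr =>
          simp only [Option.bind_some]
          rw [ih vr.1]
          cases h2 : T.runs l vr.1 with
          | none => simp
          | some ws =>
              simp only [Option.bind_some, Option.map_some]
              cases T.runs l2 ws.1 <;> simp

theorem run_length (q : Q) (u : List A) (vr : List A × Q)
    (h : T.run q u = some vr) : vr.1.length = u.length := by
  induction u generalizing q vr with
  | nil =>
      simp only [run, Option.some.injEq] at h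
      cases h; simp
  | cons a as ih =>
      simp only [run] at h
      cases h1 : T.δ q a with
      | none => simp [h1] at h
      | some bp =>
          rw [h1, Option.bind_some] at h
          cases h2 : T.run bp.2 as with
          | none => simp [h2] at h
          | some ws =>
              rw [h2, Option.map_some] at h
              cases h
              simp [ih bp.2 ws h2]

theorem runs_length (l : List Q) (u : List A) (vd : List A × List Q)
    (h : T.runs l u = some vd) : vd.1.length = u.length ∧ vd.2.length = l.length := by
  induction l generalizing u vd with
  | nil =>
      simp only [runs, Option.some.injEq] at h
      cases h; simp
  | cons a l ih =>
      simp only [runs] at h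
      cases h1 : T.run a u with
      | none => simp [h1] at h
      | some vr =>
          rw [h1, Option.bind_some] at h
          cases h2 : T.runs l vr.1 with
          | none => simp [h2] at h
          | some ws =>
              rw [h2, Option.map_some] at h
              cases h
              have := ih vr.1 ws h2
              simp [this.1, this.2, T.run_length a u vr h1]

end SAut

/-- if `p⃗r⃗∘` and `q⃗r⃗∘` act differently on some word, then they act differently
on a word of length at most `|Q|^(|p⃗|+|q⃗|+|r⃗|)`. (Lists are written with the
first-acting state first, so `p⃗ r⃗ ∘` is `T.act (r ++ p)`.) -/
theorem word_problem_upper_bound {Q A : Type} [Fintype Q] [Fintype A]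
    (T : SAut Q A) (p q r : List Q)
    (h : ∃ u : List A, T.act (r ++ p) u ≠ T.act (r ++ q) u) :
    ∃ u : List A, u.length ≤ Fintype.card Q ^ (p.length + q.length + r.length) ∧
      T.act (r ++ p) u ≠ T.act (r ++ q) u := by
  classical
  set N := Fintype.card Q ^ (p.length + q.length + r.length) with hN
  have hex : ∃ n, ∃ u : List A, u.length = n ∧ T.act (r ++ p) u ≠ T.act (r ++ q) u := by
    obtain ⟨u, hu⟩ := h
    exact ⟨u.length, u, rfl, hu⟩
  obtain ⟨u, hun, hu⟩ := Nat.find_spec hex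
  refine ⟨u, ?_, hu⟩
  by_contra hlt
  push_neg at hlt
  -- hlt : N < u.length
  have hA : ∀ i, i < u.length → T.act (r ++ p) (u.take i) = T.act (r ++ q) (u.take i) := by
    intro i hi
    by_contra hne
    have hl : (u.take i).length < Nat.find hex := by
      rw [List.length_take]; omega
    exact Nat.find_min hex hl ⟨u.take i, rfl, hne⟩
  have hB : ∀ i, i < u.length → ∃ vd vd' : List A × List Q,
      T.runs (r ++ p) (u.take i) = some vd ∧ T.runs (r ++ q) (u.take i) = some vd'
      ∧ vd.1 = vd'.1 := by
    intro i hi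
    cases hcp : T.runs (r ++ p) (u.take i) with
    | none =>
        exfalso
        have hap : T.act (r ++ p) (u.take i) = none := by
          rw [T.act_runs, hcp]; rfl
        have haq : T.act (r ++ q) (u.take i) = none := (hA i hi) ▸ hap
        have hcq : T.runs (r ++ q) (u.take i) = none := by
          rw [T.act_runs] at haq
          exact Option.map_eq_none_iff.mp haq
        have e1 : T.act (r ++ p) u = none := by
          conv_lhs => rw [← List.take_append_drop i u]
          rw [T.act_runs, T.runs_append, hcp]; rfl
        have e2 : T.act (r ++ q) u = none := by
          conv_lhs => rw [← List.take_append_drop i u]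
          rw [T.act_runs, T.runs_append, hcq]; rfl
        exact hu (e1.trans e2.symm)
    | some vd =>
        have haq : T.act (r ++ q) (u.take i) = some vd.1 := by
          rw [← hA i hi, T.act_runs, hcp]; rfl
        rw [T.act_runs] at haq
        obtain ⟨vd', hvd', h1⟩ := Option.map_eq_some_iff.mp haq
        exact ⟨vd, vd', rfl, hvd', h1.symm⟩
  have hchar : ∀ i, i < u.length →
      ∃ (v : List A) (dr : List Q) (vp : List A) (dp : List Q) (vq : List A) (dq : List Q),
        T.runs r (u.take i) = some (v, dr) ∧ T.runs p v = some (vp, dp) ∧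
        T.runs q v = some (vq, dq) ∧
        dr.length = r.length ∧ dp.length = p.length ∧ dq.length = q.length := by
    intro i hi
    obtain ⟨vd, vd', hp, hq, _⟩ := hB i hi
    have hp' := (T.runs_split r p (u.take i)).symm.trans hp
    have hq' := (T.runs_split r q (u.take i)).symm.trans hq
    cases hr : T.runs r (u.take i) with
    | none => rw [hr] at hp'; simp at hp'
    | some w =>
        rw [hr, Option.bind_some] at hp' hq'
        obtain ⟨w1, w2⟩ := w
        obtain ⟨wp, hwp, _⟩ := Option.map_eq_some_iff.mp hp'
        obtain ⟨wq, hwq, _⟩ := Option.map_eq_some_iff.mp hq'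
        refine ⟨w1, w2, wp.1, wp.2, wq.1, wq.2, ?_, ?_, ?_, ?_, ?_, ?_⟩
        · rfl
        · exact hwp
        · exact hwq
        · exact (T.runs_length r (u.take i) (w1, w2) hr).2
        · exact (T.runs_length p w1 wp hwp).2
        · exact (T.runs_length q w1 wq hwq).2
  have hglen : ∀ i : Fin (N + 1),
      ((((T.runs r (u.take (i : ℕ))).map Prod.snd).getD []).length = r.length) ∧
      ((((T.runs r (u.take (i : ℕ))).bind fun w =>
          (T.runs p w.1).map Prod.snd).getD []).length = p.length) ∧
      ((((T.runs r (u.take (i : ℕ))).bind fun w =>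
          (T.runs q w.1).map Prod.snd).getD []).length = q.length) := by
    intro i
    have hi : (i : ℕ) < u.length := by have := i.isLt; omega
    obtain ⟨v, dr, vp, dp, vq, dq, h1, h2, h3, l1, l2, l3⟩ := hchar i hi
    rw [h1]
    simp [h2, h3, l1, l2, l3]
  set g : Fin (N + 1) → List.Vector Q r.length × List.Vector Q p.length × List.Vector Q q.length :=
    fun i => (⟨((T.runs r (u.take (i : ℕ))).map Prod.snd).getD [], (hglen i).1⟩,
      ⟨((T.runs r (u.take (i : ℕ))).bind fun w =>
          (T.runs p w.1).map Prod.snd).getD [], (hglen i).2.1⟩,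
      ⟨((T.runs r (u.take (i : ℕ))).bind fun w =>
          (T.runs q w.1).map Prod.snd).getD [], (hglen i).2.2⟩) with hg
  have hcard : Fintype.card (List.Vector Q r.length × List.Vector Q p.length × List.Vector Q q.length)
      < Fintype.card (Fin (N + 1)) := by
    have : Fintype.card (List.Vector Q r.length × List.Vector Q p.length × List.Vector Q q.length) = N := by
      simp only [Fintype.card_prod, card_vector, hN, pow_add]
      ring
    rw [this, Fintype.card_fin]
    omega
  obtain ⟨a, b, hab, hgab⟩ := Fintype.exists_ne_map_eq_of_card_lt g hcard
  have key : ∀ i j : Fin (N + 1), (i : ℕ) < (j : ℕ) → g i = g j → False := by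
    intro i j hij hgij
    have hiu : (i : ℕ) < u.length := by have := i.isLt; omega
    have hju : (j : ℕ) < u.length := by have := j.isLt; omega
    obtain ⟨vi, dri, vpi, dpi, vqi, dqi, hri, hpi, hqi, _, _, _⟩ := hchar i hiu
    obtain ⟨vj, drj, vpj, dpj, vqj, dqj, hrj, hpj, hqj, _, _, _⟩ := hchar j hju
    have e1 : dri = drj := by
      have := congrArg (fun t => t.1.val) hgij
      simpa [hg, hri, hrj] using this
    have e2 : dpi = dpj := by
      have := congrArg (fun t => t.2.1.val) hgij
      simpa [hg, hri, hrj, hpi, hpj] using this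
    have e3 : dqi = dqj := by
      have := congrArg (fun t => t.2.2.val) hgij
      simpa [hg, hri, hrj, hqi, hqj] using this
    -- runs of the concatenated sequences on the two prefixes
    have hRPx : T.runs (r ++ p) (u.take (i : ℕ)) = some (vpi, dri ++ dpi) := by
      rw [T.runs_split, hri, Option.bind_some, hpi]; rfl
    have hRQx : T.runs (r ++ q) (u.take (i : ℕ)) = some (vqi, dri ++ dqi) := by
      rw [T.runs_split, hri, Option.bind_some, hqi]; rfl
    have hRPy : T.runs (r ++ p) (u.take (j : ℕ)) = some (vpj, dri ++ dpi) := by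
      rw [T.runs_split, hrj, Option.bind_some, hpj, e1, e2]; rfl
    have hRQy : T.runs (r ++ q) (u.take (j : ℕ)) = some (vqj, dri ++ dqi) := by
      rw [T.runs_split, hrj, Option.bind_some, hqj, e1, e3]; rfl
    -- the outputs on the common prefixes agree
    have hvi : vpi = vqi := by
      have := hA i hiu
      rw [T.act_runs, T.act_runs, hRPx, hRQx] at this
      simpa using this
    have hvj : vpj = vqj := by
      have := hA j hju
      rw [T.act_runs, T.act_runs, hRPy, hRQy] at this
      simpa using this
    -- expressing the actions on u and on the pumped word
    have EP : T.act (r ++ p) u =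
        ((T.runs (dri ++ dpi) (u.drop (j : ℕ))).map Prod.fst).map (fun s => vpj ++ s) := by
      conv_lhs => rw [← List.take_append_drop (j : ℕ) u]
      rw [T.act_runs, T.runs_append, hRPy, Option.bind_some]
      cases T.runs (dri ++ dpi) (u.drop (j : ℕ)) <;> simp
    have EQ : T.act (r ++ q) u =
        ((T.runs (dri ++ dqi) (u.drop (j : ℕ))).map Prod.fst).map (fun s => vpj ++ s) := by
      conv_lhs => rw [← List.take_append_drop (j : ℕ) u]
      rw [T.act_runs, T.runs_append, hRQy, Option.bind_some, ← hvj]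
      cases T.runs (dri ++ dqi) (u.drop (j : ℕ)) <;> simp
    have EP' : T.act (r ++ p) (u.take (i : ℕ) ++ u.drop (j : ℕ)) =
        ((T.runs (dri ++ dpi) (u.drop (j : ℕ))).map Prod.fst).map (fun s => vpi ++ s) := by
      rw [T.act_runs, T.runs_append, hRPx, Option.bind_some]
      cases T.runs (dri ++ dpi) (u.drop (j : ℕ)) <;> simp
    have EQ' : T.act (r ++ q) (u.take (i : ℕ) ++ u.drop (j : ℕ)) =
        ((T.runs (dri ++ dqi) (u.drop (j : ℕ))).map Prod.fst).map (fun s => vpi ++ s) := by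
      rw [T.act_runs, T.runs_append, hRQx, Option.bind_some, ← hvi]
      cases T.runs (dri ++ dqi) (u.drop (j : ℕ)) <;> simp
    have hoPQ : (T.runs (dri ++ dpi) (u.drop (j : ℕ))).map Prod.fst ≠
        (T.runs (dri ++ dqi) (u.drop (j : ℕ))).map Prod.fst := by
      intro e
      exact hu (by rw [EP, EQ, e])
    have hinj : Function.Injective (fun s : List A => vpi ++ s) :=
      fun b c hbc => List.append_cancel_left hbc
    have final : T.act (r ++ p) (u.take (i : ℕ) ++ u.drop (j : ℕ)) ≠
        T.act (r ++ q) (u.take (i : ℕ) ++ u.drop (j : ℕ)) := by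
      rw [EP', EQ']
      intro e
      exact hoPQ (Option.map_injective hinj e)
    have hlen : (u.take (i : ℕ) ++ u.drop (j : ℕ)).length < Nat.find hex := by
      rw [List.length_append, List.length_take, List.length_drop]
      omega
    exact Nat.find_min hex hlen ⟨_, rfl, final⟩
  rcases lt_or_gt_of_ne hab with hx | hx
  · exact key a b hx hgab
  · exact key b a hx hgab.symm
end

section
/- Let T = (Q, Σ, δ) be a complete and reversible S-automaton. Then for every p⃗, q⃗ ∈ Q⁺ and every u ∈ Σ*: p⃗ and q⃗ represent the same element of the automaton semigroup (i.e., p⃗∘ = q⃗∘ as functions on Σ*) if and only if p⃗·u and q⃗·u represent the same element. -/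
namespace SAut

variable {Q A : Type}

-- totality
lemma run_isSome (T : SAut Q A) (hc : T.Complete) : ∀ (u : List A) (q : Q), (T.run q u).isSome
  | [], _ => rfl
  | a :: as, q => by
    obtain ⟨⟨b, r⟩, hbr⟩ := Option.isSome_iff_exists.mp (hc q a)
    obtain ⟨x, hx⟩ := Option.isSome_iff_exists.mp (run_isSome T hc as r)
    simp [run, hbr, hx]

lemma act_isSome (T : SAut Q A) (hc : T.Complete) : ∀ (l : List Q) (u : List A), (T.act l u).isSome
  | [], _ => rfl
  | q :: qs, u => by
    obtain ⟨⟨v, r⟩, hvr⟩ := Option.isSome_iff_exists.mp (T.run_isSome hc u q)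
    obtain ⟨w, hw⟩ := Option.isSome_iff_exists.mp (act_isSome T hc qs v)
    simp [act, act1, hvr, hw]

lemma dual_isSome (T : SAut Q A) (hc : T.Complete) : ∀ (l : List Q) (u : List A), (T.dual l u).isSome
  | [], _ => rfl
  | q :: qs, u => by
    obtain ⟨⟨v, r⟩, hvr⟩ := Option.isSome_iff_exists.mp (T.run_isSome hc u q)
    obtain ⟨w, hw⟩ := Option.isSome_iff_exists.mp (dual_isSome T hc qs v)
    simp [dual, act1, dual1, hvr, hw]

lemma run_append_s11 (T : SAut Q A) : ∀ (u x : List A) (q : Q),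
    T.run q (u ++ x) = (T.run q u).bind fun vr =>
      (T.run vr.2 x).map fun ws => (vr.1 ++ ws.1, ws.2)
  | [], x, q => by
    cases h : T.run q x with
    | none => simp [run, h]
    | some ws => simp [run, h]
  | a :: as, x, q => by
    cases h : T.δ q a with
    | none => simp [run, h]
    | some bp =>
      have ih := run_append_s11 T as x bp.2
      cases h2 : T.run bp.2 as with
      | none => simp [run, h, ih, h2]
      | some vr =>
        cases h3 : T.run vr.2 x with
        | none => simp [run, h, ih, h2, h3]
        | some ws => simp [run, h, ih, h2, h3]

lemma act_dual_append (T : SAut Q A) (hc : T.Complete) :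
    ∀ (l : List Q) (u v : List A) (l' : List Q),
    T.act l u = some v → T.dual l u = some l' →
    ∀ x, T.act l (u ++ x) = (T.act l' x).map (v ++ ·) ∧ T.dual l (u ++ x) = T.dual l' x
  | [], u, v, l', ha, hd, x => by
    simp only [act, Option.some_inj] at ha
    simp only [dual, Option.some_inj] at hd
    subst ha; subst hd
    exact ⟨by simp [act], rfl⟩
  | q :: qs, u, v, l', ha, hd, x => by
    obtain ⟨⟨v₁, r⟩, hvr⟩ := Option.isSome_iff_exists.mp (T.run_isSome hc u q)
    obtain ⟨⟨w₁, s⟩, hws⟩ := Option.isSome_iff_exists.mp (T.run_isSome hc x r)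
    simp only [act, act1, hvr, Option.map_some, Option.bind_some] at ha
    simp only [dual, act1, dual1, hvr, Option.map_some, Option.bind_some] at hd
    obtain ⟨l₂, hl₂, rfl⟩ : ∃ l₂, T.dual qs v₁ = some l₂ ∧ l' = r :: l₂ := by
      cases h : T.dual qs v₁ with
      | none => rw [h] at hd; simp at hd
      | some l₂ => rw [h] at hd; simp at hd; exact ⟨l₂, rfl, hd.symm⟩
    have ih := act_dual_append T hc qs v₁ v l₂ ha hl₂ w₁
    have hrun : T.run q (u ++ x) = some (v₁ ++ w₁, s) := by
      rw [T.run_append_s11 u x q, hvr]; simp [hws]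
    constructor
    · rw [show T.act (q :: qs) (u ++ x) = T.act qs (v₁ ++ w₁) by
        simp [act, act1, hrun]]
      rw [ih.1]
      simp [act, act1, hws]
    · rw [show T.dual (q :: qs) (u ++ x)
          = (T.dual qs (v₁ ++ w₁)).map (s :: ·) by
        simp [dual, act1, dual1, hrun]]
      rw [ih.2]
      simp [dual, act1, dual1, hws]

-- injectivity of ending state (reversibility)
lemma run_state_inj (T : SAut Q A) (hrev : T.Reversible) :
    ∀ (u : List A) (p p' : Q) (v v' : List A) (r : Q),
    T.run p u = some (v, r) → T.run p' u = some (v', r) → p = p'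
  | [], p, p', v, v', r, h1, h2 => by
    simp [run] at h1 h2
    rw [h1.2, h2.2]
  | a :: as, p, p', v, v', r, h1, h2 => by
    cases hd1 : T.δ p a with
    | none => simp [run, hd1] at h1
    | some bp =>
    cases hd2 : T.δ p' a with
    | none => simp [run, hd2] at h2
    | some bp' =>
    rw [run, hd1] at h1
    rw [run, hd2] at h2
    simp only [Option.bind_some] at h1 h2
    cases hr1 : T.run bp.2 as with
    | none => rw [hr1] at h1; simp at h1
    | some vr =>
    cases hr2 : T.run bp'.2 as with
    | none => rw [hr2] at h2; simp at h2
    | some vr' =>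
    rw [hr1] at h1; rw [hr2] at h2
    simp only [Option.map_some, Option.some_inj] at h1 h2
    have hrr : vr.2 = r := congrArg Prod.snd h1
    have hrr' : vr'.2 = r := congrArg Prod.snd h2
    have : bp.2 = bp'.2 := run_state_inj T hrev as bp.2 bp'.2 vr.1 vr'.1 r
      (by rw [hr1, ← hrr]) (by rw [hr2, ← hrr'])
    exact hrev p p' a bp.1 bp'.1 bp.2 (by rw [hd1]) (by rw [hd2, this])

lemma dual_inj (T : SAut Q A) (hrev : T.Reversible) :
    ∀ (l m : List Q) (u : List A) (w : List Q),
    T.dual l u = some w → T.dual m u = some w → l = m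
  | [], [], _, _, _, _ => rfl
  | [], q :: qs, u, w, h1, h2 => by
    simp only [dual, Option.some_inj] at h1
    subst h1
    cases hvr : T.run q u with
    | none => simp [dual, act1, dual1, hvr] at h2
    | some vr =>
      simp only [dual, act1, dual1, hvr, Option.map_some, Option.bind_some] at h2
      cases h : T.dual qs vr.1 with
      | none => rw [h] at h2; simp at h2
      | some rest => rw [h] at h2; simp at h2
  | q :: qs, [], u, w, h1, h2 => by
    simp only [dual, Option.some_inj] at h2
    subst h2
    cases hvr : T.run q u with
    | none => simp [dual, act1, dual1, hvr] at h1
    | some vr =>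
      simp only [dual, act1, dual1, hvr, Option.map_some, Option.bind_some] at h1
      cases h : T.dual qs vr.1 with
      | none => rw [h] at h1; simp at h1
      | some rest => rw [h] at h1; simp at h1
  | q :: qs, q' :: qs', u, w, h1, h2 => by
    cases hvr : T.run q u with
    | none => simp [dual, act1, dual1, hvr] at h1
    | some vr =>
    cases hvr' : T.run q' u with
    | none => simp [dual, act1, dual1, hvr'] at h2
    | some vr' =>
    simp only [dual, act1, dual1, hvr, hvr', Option.map_some, Option.bind_some] at h1 h2
    cases h : T.dual qs vr.1 with
    | none => rw [h] at h1; simp at h1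
    | some rest =>
    cases h' : T.dual qs' vr'.1 with
    | none => rw [h'] at h2; simp at h2
    | some rest' =>
    rw [h] at h1; rw [h'] at h2
    simp only [Option.map_some, Option.some_inj] at h1 h2
    rw [← h2] at h1
    obtain ⟨hhd, htl⟩ := List.cons.injEq _ _ _ _ ▸ h1
    have hq : q = q' := T.run_state_inj hrev u q q' vr.1 vr'.1 vr.2
      (by rw [hvr]) (by rw [hvr', hhd])
    subst hq
    rw [hvr] at hvr'
    have : vr = vr' := by injection hvr'
    subst this
    have : qs = qs' := dual_inj T hrev qs qs' vr.1 rest (by rw [h]) (by rw [h', htl])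
    rw [this]

lemma dual_length (T : SAut Q A) :
    ∀ (l : List Q) (u : List A) (l' : List Q), T.dual l u = some l' → l'.length = l.length
  | [], _, l', h => by simp only [dual, Option.some_inj] at h; subst h; rfl
  | q :: qs, u, l', h => by
    cases hvr : T.run q u with
    | none => simp [dual, act1, dual1, hvr] at h
    | some vr =>
    simp only [dual, act1, dual1, hvr, Option.map_some, Option.bind_some] at h
    cases h2 : T.dual qs vr.1 with
    | none => rw [h2] at h; simp at h
    | some rest =>
    rw [h2] at h
    simp only [Option.map_some, Option.some_inj] at h
    subst h
    simp [dual_length T qs vr.1 rest h2]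

-- forward step
lemma act_eq_step (T : SAut Q A) (hc : T.Complete) (u : List A) :
    ∀ (p q p' q' : List Q), T.dual p u = some p' → T.dual q u = some q' →
    T.act p = T.act q → T.act p' = T.act q' := by
  intro p q p' q' hdp hdq h
  funext x
  obtain ⟨v, hv⟩ := Option.isSome_iff_exists.mp (T.act_isSome hc p u)
  have hvq : T.act q u = some v := by rw [← h, hv]
  have h1 := (T.act_dual_append hc p u v p' hv hdp x).1
  have h2 := (T.act_dual_append hc q u v q' hvq hdq x).1
  have := congrFun h (u ++ x)
  rw [h1, h2] at this
  exact Option.map_injective (List.append_right_injective v) this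

lemma exists_iter_fix {α : Type} (f : α → α) (hf : Function.Injective f)
    (S : Set α) (hS : S.Finite) (hmap : ∀ a ∈ S, f a ∈ S)
    (p : α) (hp : p ∈ S) : ∃ k, 0 < k ∧ f^[k] p = p := by
  have hiter : ∀ i, f^[i] p ∈ S := by
    intro i; induction i with
    | zero => exact hp
    | succ n ih => rw [Function.iterate_succ_apply']; exact hmap _ ih
  have : ∃ i j : ℕ, i ≠ j ∧ f^[i] p = f^[j] p := by
    haveI := hS.to_subtype
    obtain ⟨i, j, hij, hfe⟩ :=
      Finite.exists_ne_map_eq_of_infinite (fun i : ℕ => (⟨f^[i] p, hiter i⟩ : S))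
    exact ⟨i, j, hij, congrArg Subtype.val hfe⟩
  obtain ⟨i, j, hij, hfe⟩ := this
  rcases lt_or_gt_of_ne hij with hlt | hlt
  · refine ⟨j - i, by omega, ?_⟩
    have : f^[i + (j - i)] p = f^[i] p := by rw [show i + (j - i) = j by omega, ← hfe]
    rw [Function.iterate_add_apply] at this
    exact hf.iterate i this
  · refine ⟨i - j, by omega, ?_⟩
    have : f^[j + (i - j)] p = f^[j] p := by rw [show j + (i - j) = i by omega, hfe]
    rw [Function.iterate_add_apply] at this
    exact hf.iterate j this

end SAut

/-- for a complete and reversible S-automaton, `p⃗` and `q⃗` are equal in the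
generated semigroup iff `p⃗ · u` and `q⃗ · u` are. -/
theorem reversibility_on_defining_relations {Q A : Type} [Fintype Q] [Fintype A]
    (T : SAut Q A) (hc : T.Complete) (hrev : T.Reversible)
    (p q : List Q) (hp : p ≠ []) (hq : q ≠ []) (u : List A) (p' q' : List Q)
    (hdp : T.dual p u = some p') (hdq : T.dual q u = some q') :
    T.act p = T.act q ↔ T.act p' = T.act q' := by
  constructor
  · exact T.act_eq_step hc u p q p' q' hdp hdq
  · intro hr
    set fd : List Q → List Q := fun l => (T.dual l u).get (T.dual_isSome hc l u) with hfd
    have hspec : ∀ l, T.dual l u = some (fd l) := fun l => (Option.some_get _).symm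
    have hinj : Function.Injective fd := by
      intro a b hab
      exact T.dual_inj hrev a b u (fd a) (hspec a) (hab ▸ hspec b)
    have hlen : ∀ l : List Q, (fd l).length = l.length :=
      fun l => T.dual_length l u (fd l) (hspec l)
    have hfp : fd p = p' := by
      have := (hspec p).symm.trans hdp; injection this
    have hfq : fd q = q' := by
      have := (hspec q).symm.trans hdq; injection this
    have chain : ∀ j, T.act (fd^[j] p') = T.act (fd^[j] q') := by
      intro j
      induction j with
      | zero => exact hr
      | succ n ih =>
        rw [Function.iterate_succ_apply', Function.iterate_succ_apply']
        exact T.act_eq_step hc u _ _ _ _ (hspec _) (hspec _) ih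
    -- periodicity
    have hper : ∀ l : List Q, ∃ k, 0 < k ∧ fd^[k] l = l := by
      intro l
      refine SAut.exists_iter_fix fd hinj {m : List Q | m.length = l.length} ?_ ?_ l rfl
      · exact List.finite_length_eq Q _
      · intro a ha; simpa [hlen] using ha
    obtain ⟨k, hk, hkp⟩ := hper p
    obtain ⟨m, hm, hmq⟩ := hper q
    have hNp : fd^[k * m] p = p := by
      rw [Function.iterate_mul]
      exact Function.IsFixedPt.iterate hkp m
    have hNq : fd^[k * m] q = q := by
      rw [mul_comm, Function.iterate_mul]
      exact Function.IsFixedPt.iterate hmq k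
    have hpos : 1 ≤ k * m := Nat.one_le_iff_ne_zero.mpr (by positivity)
    have key := chain (k * m - 1)
    rw [← hfp, ← hfq, ← Function.iterate_succ_apply,
        ← Function.iterate_succ_apply,
        show (k * m - 1).succ = k * m by omega, hNp, hNq] at key
    exact key
end
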